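/- Let a > 0 and let P(x,y) be a polynomial in two real variables such that y·P_xx(x,y) + P_yy(x,y) = 0 for all (x,y) ∈ ℝ², and P(x,−a) = 0 and P(x,a) = 0 for all x ∈ ℝ. Then P is identically zero. -/

import Mathlib

/-!
Write `P = ∑ᵢ xⁱ Qᵢ(y)`. The Tricomi equation says `Qᵢ'' = -(i+1)(i+2) y Qᵢ₊₂` and the boundary
conditions say `Qᵢ(±a) = 0`. By descending induction on `i`, once `Qᵢ₊₂ = 0` the polynomial `Qᵢ`
is affine with two distinct roots, hence zero.
-/

open Polynomial

theorem Polynomial.eq_zero_of_coeff_add_two {R : Type*} [Semiring R] (p : R[X])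
    (h : ∀ i, p.coeff (i + 2) = 0 → p.coeff i = 0) : p = 0 := by
  have key : ∀ n i, p.natDegree < i + 2 * n → p.coeff i = 0 := by
    intro n
    induction n with
    | zero => exact fun i hi => coeff_eq_zero_of_natDegree_lt hi
    | succ n ih => exact fun i hi => h i (ih (i + 2) (by omega))
  ext i
  exact key (p.natDegree + 1) i (by omega)

theorem Polynomial.eq_zero_of_derivative_derivative_eq_zero {R : Type*} [CommRing R] [IsDomain R]
    [CharZero R] {p : R[X]} (hp : derivative (derivative p) = 0) {s t : R} (hst : s ≠ t)
    (hs : p.eval s = 0) (ht : p.eval t = 0) : p = 0 := by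
  classical
  have hdeg : p.natDegree < 2 := by
    have := derivative_eq_zero.mp hp
    rw [natDegree_derivative] at this
    omega
  refine eq_zero_of_natDegree_lt_card_of_eval_eq_zero' p {s, t} ?_ ?_
  · simp [hs, ht]
  · rwa [Finset.card_pair hst]

namespace MvPolynomial

variable {R : Type*} [CommRing R]

/-- `p(x, y)` as a polynomial in `x = X 0` with coefficients in `R[y]`; the opposite nesting to
`Polynomial.Bivariate.equivMvPolynomial`. -/
noncomputable def toBivariate : MvPolynomial (Fin 2) R →ₐ[R] R[X][X] :=
  aeval ![Polynomial.X, Polynomial.C Polynomial.X]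

@[simp] theorem toBivariate_X_zero :
    toBivariate (X 0 : MvPolynomial (Fin 2) R) = Polynomial.X := by
  simp [toBivariate]

@[simp] theorem toBivariate_X_one :
    toBivariate (X 1 : MvPolynomial (Fin 2) R) = Polynomial.C Polynomial.X := by
  simp [toBivariate]

theorem toBivariate_pderiv_zero (p : MvPolynomial (Fin 2) R) :
    toBivariate (pderiv 0 p) = derivative (toBivariate p) := by
  induction p using MvPolynomial.induction_on with
  | C a => simp
  | add p q hp hq => simp [hp, hq]
  | mul_X p i hp => fin_cases i <;> simp [hp, mul_comm]

theorem coeff_toBivariate_pderiv_one (p : MvPolynomial (Fin 2) R) (i : ℕ) :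
    (toBivariate (pderiv 1 p)).coeff i = derivative ((toBivariate p).coeff i) := by
  induction p using MvPolynomial.induction_on generalizing i with
  | C a => cases i <;> simp
  | add p q hp hq => simp [hp, hq]
  | mul_X p j hp => fin_cases j <;> cases i <;> simp [hp, mul_comm]

theorem evalEval_toBivariate (p : MvPolynomial (Fin 2) R) (x y : R) :
    (toBivariate p).evalEval y x = eval ![x, y] p := by
  induction p using MvPolynomial.induction_on with
  | C a => simp
  | add p q hp hq => simp [hp, hq]
  | mul_X p i hp => fin_cases i <;> simp [hp, evalEval_C]

theorem eq_zero_of_forall_eval_eq_zero [IsDomain R] [Infinite R] {p : MvPolynomial (Fin 2) R}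
    (h : ∀ x y, eval ![x, y] p = 0) : p = 0 := by
  refine MvPolynomial.funext fun v => ?_
  rw [map_zero, ← h (v 0) (v 1)]
  congr
  ext i
  fin_cases i <;> rfl

theorem eval_coeff_toBivariate_eq_zero [IsDomain R] [Infinite R] {p : MvPolynomial (Fin 2) R}
    {y : R} (h : ∀ x, eval ![x, y] p = 0) (i : ℕ) : ((toBivariate p).coeff i).eval y = 0 := by
  have hmap : (toBivariate p).map (evalRingHom y) = 0 :=
    Polynomial.funext fun x => by simp [map_evalRingHom_eval, evalEval_toBivariate, h]
  simpa using congr_arg (Polynomial.coeff · i) hmap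

theorem eq_zero_of_toBivariate_eq_zero [IsDomain R] [Infinite R] {p : MvPolynomial (Fin 2) R}
    (h : toBivariate p = 0) : p = 0 :=
  eq_zero_of_forall_eval_eq_zero fun x y => by rw [← evalEval_toBivariate, h, evalEval_zero]

noncomputable def tricomi (p : MvPolynomial (Fin 2) R) : MvPolynomial (Fin 2) R :=
  X 1 * pderiv 0 (pderiv 0 p) + pderiv 1 (pderiv 1 p)

theorem coeff_toBivariate_tricomi (p : MvPolynomial (Fin 2) R) (i : ℕ) :
    (toBivariate (tricomi p)).coeff i =
      ((i + 1) * (i + 2) : R[X]) * Polynomial.X * (toBivariate p).coeff (i + 2) +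
        derivative (derivative ((toBivariate p).coeff i)) := by
  simp only [tricomi, map_add, map_mul, toBivariate_X_one, toBivariate_pderiv_zero,
    Polynomial.coeff_add, Polynomial.coeff_C_mul, coeff_toBivariate_pderiv_one, coeff_derivative]
  push_cast
  ring

end MvPolynomial

open MvPolynomial

/-- Uniqueness of polynomial solutions of the Dirichlet problem for the homogeneous
Tricomi equation in the mixed strip `-a < y < a`. Here variable `0` is `x` and
variable `1` is `y`; `pderiv` is the formal partial derivative. -/
theorem tricomi_polynomial_uniqueness_mixed (a : ℝ) (ha : 0 < a)
    (P : MvPolynomial (Fin 2) ℝ)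
    (hT : ∀ x y : ℝ,
      y * eval ![x, y] (pderiv 0 (pderiv 0 P)) + eval ![x, y] (pderiv 1 (pderiv 1 P)) = 0)
    (hbot : ∀ x : ℝ, eval ![x, -a] P = 0)
    (htop : ∀ x : ℝ, eval ![x, a] P = 0) :
    P = 0 := by
  have hP : tricomi P = 0 :=
    eq_zero_of_forall_eval_eq_zero fun x y => by simpa [tricomi] using hT x y
  refine eq_zero_of_toBivariate_eq_zero (eq_zero_of_coeff_add_two _ fun i hi => ?_)
  have hrec := coeff_toBivariate_tricomi P i
  rw [hP, map_zero, Polynomial.coeff_zero, hi, mul_zero, zero_add] at hrec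
  exact eq_zero_of_derivative_derivative_eq_zero hrec.symm (by linarith : -a ≠ a)
    (eval_coeff_toBivariate_eq_zero hbot i) (eval_coeff_toBivariate_eq_zero htop i)
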